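/- The normalized p-adic valuations val_p(h_k)/k of the coefficients h_k = (α_1)_k···(α_n)_k / ((β_1)_k···(β_m)_k) of a hypergeometric series converge to (n − m)/(p − 1) as k → ∞. -/

import Mathlib

open Finset Filter

lemma poch_prod (k : ℕ) (r : ℚ) :
    (ascPochhammer ℚ k).eval r = ∏ j ∈ Finset.range k, (r + j) := by
  induction k with
  | zero => simp
  | succ k ih => rw [ascPochhammer_succ_eval, ih, Finset.prod_range_succ]

lemma padicValRat_prod (p : ℕ) [Fact p.Prime] {ι : Type*} (s : Finset ι) (f : ι → ℚ)
    (hf : ∀ i ∈ s, f i ≠ 0) :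
    padicValRat p (∏ i ∈ s, f i) = ∑ i ∈ s, padicValRat p (f i) := by
  induction s using Finset.cons_induction with
  | empty => simp
  | cons i s his ih =>
    rw [Finset.prod_cons, Finset.sum_cons,
      padicValRat.mul (hf i (Finset.mem_cons_self i s))
        (Finset.prod_ne_zero_iff.mpr fun j hj => hf j (Finset.mem_cons_of_mem hj)), ih]
    exact fun j hj => hf j (Finset.mem_cons_of_mem hj)

lemma den_not_dvd (p : ℕ) [Fact p.Prime] (α : ℚ) (hα : 0 ≤ padicValRat p α) :
    ¬ (p ∣ α.den) := by
  intro hdvd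
  have hnum : ¬ ((p:ℤ) ∣ α.num) := by
    intro hn
    have hco := α.reduced
    have hpn : p ∣ α.num.natAbs := by
      have := Int.natAbs_dvd_natAbs.mpr hn
      simpa using this
    have hg : p ∣ Nat.gcd α.num.natAbs α.den := Nat.dvd_gcd hpn hdvd
    rw [hco] at hg
    exact (Fact.out : p.Prime).one_lt.ne' (Nat.eq_one_of_dvd_one hg ▸ rfl)
  have h1 : padicValRat p α = padicValInt p α.num - padicValNat p α.den := rfl
  have h2 : padicValInt p α.num = 0 := padicValInt.eq_zero_of_not_dvd hnum
  have h3 : 1 ≤ padicValNat p α.den := one_le_padicValNat_of_dvd α.den_ne_zero hdvd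
  omega

lemma val_add_nat (p : ℕ) [Fact p.Prime] (α : ℚ) (hα : 0 ≤ padicValRat p α) (j : ℕ)
    (hne : α + j ≠ 0) :
    padicValRat p (α + j) = padicValNat p (α.num + j * α.den).natAbs := by
  have hb0 : ((α.den : ℤ) : ℚ) ≠ 0 := by exact_mod_cast α.den_ne_zero
  have key : α + j = ((α.num + j * α.den : ℤ) : ℚ) / ((α.den : ℤ) : ℚ) := by
    rw [eq_div_iff hb0]
    push_cast
    rw [add_mul]
    congr 1
    exact_mod_cast (Rat.mul_den_eq_num α)
  have hnum0 : ((α.num + j * α.den : ℤ) : ℚ) ≠ 0 := by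
    intro h
    rw [key, h, zero_div] at hne
    exact hne rfl
  rw [key, padicValRat.div hnum0 hb0]
  rw [padicValRat.of_int, padicValRat.of_int]
  have : padicValInt p (α.den : ℤ) = 0 := by
    apply padicValInt.eq_zero_of_not_dvd
    rw [Int.natCast_dvd_natCast]
    exact den_not_dvd p α hα
  rw [this]
  simp [padicValInt]

lemma count_upper (q : ℕ) (hq : 0 < q) (a : ℤ) (b : ℕ) (hco : IsCoprime (q:ℤ) (b:ℤ)) (k : ℕ) :
    ((Finset.range k).filter (fun j : ℕ => (q:ℤ) ∣ a + (j:ℤ) * b)).card ≤ k / q + 1 := by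
  have : ((Finset.range k).filter (fun j : ℕ => (q:ℤ) ∣ a + (j:ℤ) * b)).card
      ≤ (Finset.range (k / q + 1)).card := by
    apply Finset.card_le_card_of_injOn (fun j => j / q)
    · intro j hj
      simp only [Finset.mem_coe, Finset.mem_filter, Finset.mem_range] at hj ⊢
      exact Nat.lt_succ_of_le (Nat.div_le_div_right hj.1.le)
    · intro j hj j' hj' hdiv
      simp only [Finset.coe_filter, Set.mem_setOf_eq, Finset.mem_range] at hj hj'
      have hd : (q:ℤ) ∣ ((j:ℤ) - j') * b := by
        have h := dvd_sub hj.2 hj'.2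
        have : (a + j * b) - (a + j' * b) = ((j:ℤ) - j') * b := by ring
        rwa [this] at h
      have hd2 : (q:ℤ) ∣ (j:ℤ) - j' := hco.dvd_of_dvd_mul_right hd
      have hmod : (j':ℤ) % q = (j:ℤ) % q := Int.modEq_iff_dvd.mpr hd2
      have hmodn : j' % q = j % q := by exact_mod_cast hmod
      have e1 := Nat.div_add_mod j q
      have hdiv' : j / q = j' / q := hdiv
      have e2 := Nat.div_add_mod j' q
      rw [← hdiv'] at e2
      omega
  simpa using this

lemma count_lower (q : ℕ) (hq : 0 < q) (a : ℤ) (b : ℕ) (j0 : ℕ)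
    (hj0 : (q:ℤ) ∣ a + (j0:ℤ) * b) (k : ℕ) :
    (k - j0) / q ≤ ((Finset.range k).filter (fun j : ℕ => (q:ℤ) ∣ a + (j:ℤ) * b)).card := by
  have : (Finset.range ((k - j0) / q)).card
      ≤ ((Finset.range k).filter (fun j : ℕ => (q:ℤ) ∣ a + (j:ℤ) * b)).card := by
    apply Finset.card_le_card_of_injOn (fun t => j0 + q * t)
    · intro t ht
      simp only [Finset.mem_coe, Finset.mem_range] at ht
      simp only [Finset.mem_coe, Finset.mem_filter, Finset.mem_range]
      constructor
      · have h1 : (t + 1) * q ≤ k - j0 := (Nat.le_div_iff_mul_le hq).mp ht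
        have h2 : q * t + q = (t + 1) * q := by ring
        have h3 : q * t + q ≤ k - j0 := h2 ▸ h1
        omega
      · have : a + ((j0 + q * t : ℕ) : ℤ) * b = (a + (j0:ℤ) * b) + q * (t * b) := by
          push_cast; ring
        rw [this]
        exact dvd_add hj0 ⟨t * b, rfl⟩
    · intro t ht t' ht' he
      simp only at he
      exact Nat.eq_of_mul_eq_mul_left hq (by omega)
  simpa using this

lemma exists_j0 (q : ℕ) (hq : 0 < q) (a : ℤ) (b : ℕ) (hco : Nat.Coprime q b) :
    ∃ j0 : ℕ, j0 < q ∧ (q:ℤ) ∣ a + (j0:ℤ) * b := by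
  haveI : NeZero q := ⟨hq.ne'⟩
  obtain ⟨u, hu⟩ : IsUnit (b : ZMod q) := (ZMod.isUnit_iff_coprime b q).mpr hco.symm
  set x : ZMod q := -(a : ZMod q) * ↑u⁻¹ with hx
  refine ⟨x.val, ZMod.val_lt x, ?_⟩
  rw [← ZMod.intCast_zmod_eq_zero_iff_dvd]
  push_cast
  rw [ZMod.natCast_val, ZMod.cast_id, hx, ← hu, mul_assoc, Units.inv_mul]
  ring

lemma nat_div_real_bounds (x q : ℕ) (hq : 0 < q) :
    (x:ℝ)/q - 1 < ((x / q : ℕ) : ℝ) ∧ ((x / q : ℕ) : ℝ) ≤ (x:ℝ)/q := by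
  have h1 := Nat.div_add_mod x q
  have h2 := Nat.mod_lt x hq
  have hq' : (0:ℝ) < q := by exact_mod_cast hq
  constructor
  · rw [div_sub_one hq'.ne', div_lt_iff₀ hq']
    have h1' : (q:ℝ) * ((x/q:ℕ):ℝ) + ((x % q:ℕ):ℝ) = x := by exact_mod_cast h1
    have h2' : ((x % q:ℕ):ℝ) < q := by exact_mod_cast h2
    nlinarith [h1', h2']
  · rw [le_div_iff₀ hq']
    exact_mod_cast Nat.div_mul_le_self x q

lemma count_abs (p : ℕ) (hp : p.Prime) (a : ℤ) (b : ℕ) (hb : ¬ p ∣ b) (r k : ℕ) :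
    |(((Finset.range k).filter (fun j : ℕ => ((p^r : ℕ):ℤ) ∣ a + (j:ℤ) * b)).card : ℝ)
      - (k:ℝ) / (p:ℝ)^r| ≤ 2 := by
  set q := p ^ r with hqdef
  have hq : 0 < q := pow_pos hp.pos r
  have hqR : ((q:ℕ):ℝ) = (p:ℝ)^r := by norm_cast
  have hcon : Nat.Coprime q b := (Nat.Prime.coprime_iff_not_dvd hp |>.mpr hb).pow_left r
  have hcoZ : IsCoprime (q:ℤ) (b:ℤ) := Nat.isCoprime_iff_coprime.mpr hcon
  obtain ⟨j0, hj0lt, hj0⟩ := exists_j0 q hq a b hcon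
  have hup := count_upper q hq a b hcoZ k
  have hlo := count_lower q hq a b j0 hj0 k
  set c := ((Finset.range k).filter (fun j : ℕ => (q:ℤ) ∣ a + (j:ℤ) * b)).card with hc
  rw [abs_le]
  have hq' : (0:ℝ) < q := by exact_mod_cast hq
  have b1 := nat_div_real_bounds k q hq
  have b2 := nat_div_real_bounds (k - j0) q hq
  have hcub : (c:ℝ) ≤ ((k / q : ℕ):ℝ) + 1 := by exact_mod_cast hup
  have hclb : (((k - j0) / q : ℕ):ℝ) ≤ c := by exact_mod_cast hlo
  have hsub : ((k - j0 : ℕ):ℝ) ≥ (k:ℝ) - j0 := by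
    rcases le_total j0 k with h | h
    · rw [Nat.cast_sub h]
    · have : ((k - j0 : ℕ):ℝ) = 0 := by rw [Nat.sub_eq_zero_of_le h]; norm_num
      rw [this]
      have : (k:ℝ) ≤ j0 := by exact_mod_cast h
      linarith
  have hj0R : (j0:ℝ) ≤ (q:ℝ) - 1 := by
    have : (j0:ℝ) + 1 ≤ q := by exact_mod_cast hj0lt
    linarith
  rw [← hqR]
  have hq1 : (1:ℝ) ≤ q := by exact_mod_cast hq
  constructor
  · have h6 : (k:ℝ) - q ≤ ((k - j0:ℕ):ℝ) := by linarith
    have key : (k:ℝ)/q - 1 ≤ ((k - j0:ℕ):ℝ)/q := by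
      have e : (k:ℝ)/q - 1 = ((k:ℝ)-q)/q := by field_simp
      rw [e]
      gcongr
    linarith [b2.1, hclb]
  · linarith [hcub, b1.2]

lemma val_sum_eq (p : ℕ) [Fact p.Prime] (x : ℕ → ℕ) (k R : ℕ)
    (hx : ∀ j < k, x j ≠ 0) (hR : ∀ j < k, x j < p ^ R) :
    ∑ j ∈ Finset.range k, padicValNat p (x j)
      = ∑ r ∈ Finset.Icc 1 R, ((Finset.range k).filter (fun j : ℕ => p ^ r ∣ x j)).card := by
  have hp : p.Prime := Fact.out
  have step : ∀ j < k, padicValNat p (x j)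
      = ((Finset.Icc 1 R).filter (fun r => p ^ r ∣ x j)).card := by
    intro j hj
    have hvR : padicValNat p (x j) ≤ R := by
      by_contra hcon
      push_neg at hcon
      have hdvd : p ^ padicValNat p (x j) ∣ x j := pow_padicValNat_dvd
      have := Nat.le_of_dvd (Nat.pos_of_ne_zero (hx j hj)) hdvd
      have hpow : p ^ R < p ^ padicValNat p (x j) :=
        Nat.pow_lt_pow_right hp.one_lt hcon
      have hxR := hR j hj
      omega
    have : (Finset.Icc 1 R).filter (fun r => p ^ r ∣ x j)
        = Finset.Icc 1 (padicValNat p (x j)) := by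
      ext r
      simp only [Finset.mem_filter, Finset.mem_Icc]
      constructor
      · rintro ⟨⟨h1, h2⟩, hdvd⟩
        exact ⟨h1, (padicValNat_dvd_iff_le (hx j hj)).mp hdvd⟩
      · rintro ⟨h1, h2⟩
        exact ⟨⟨h1, h2.trans hvR⟩, (padicValNat_dvd_iff_le (hx j hj)).mpr h2⟩
    rw [this, Nat.card_Icc]
    omega
  calc ∑ j ∈ Finset.range k, padicValNat p (x j)
      = ∑ j ∈ Finset.range k, ((Finset.Icc 1 R).filter (fun r => p ^ r ∣ x j)).card := by
        apply Finset.sum_congr rfl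
        intro j hj
        exact step j (Finset.mem_range.mp hj)
    _ = ∑ j ∈ Finset.range k, ∑ r ∈ Finset.Icc 1 R, if p ^ r ∣ x j then 1 else 0 := by
        apply Finset.sum_congr rfl
        intro j _
        rw [Finset.card_filter]
    _ = ∑ r ∈ Finset.Icc 1 R, ∑ j ∈ Finset.range k, if p ^ r ∣ x j then 1 else 0 :=
        Finset.sum_comm
    _ = ∑ r ∈ Finset.Icc 1 R, ((Finset.range k).filter (fun j : ℕ => p ^ r ∣ x j)).card := by
        apply Finset.sum_congr rfl
        intro r _
        rw [Finset.card_filter]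

lemma geom_inv_sum (p : ℕ) (hp : 2 ≤ p) (R : ℕ) :
    ∑ r ∈ Finset.Icc 1 R, ((p:ℝ)^r)⁻¹ = (1 - ((p:ℝ)^R)⁻¹) / ((p:ℝ) - 1) := by
  have hp0 : (0:ℝ) < p := by positivity
  have hp1 : (p:ℝ) - 1 ≠ 0 := by
    have : (2:ℝ) ≤ p := by exact_mod_cast hp
    linarith
  induction R with
  | zero => simp
  | succ R ih =>
    rw [Finset.sum_Icc_succ_top (by omega), ih]
    have hpR : (p:ℝ)^R ≠ 0 := by positivity
    have hpR1 : (p:ℝ)^(R+1) ≠ 0 := by positivity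
    field_simp
    ring

lemma S_est (p : ℕ) (hp : p.Prime) (a : ℤ) (b : ℕ) (hb : ¬ p ∣ b) (hb1 : 1 ≤ b)
    (hnz : ∀ j : ℕ, a + (j:ℤ) * b ≠ 0) (k : ℕ) :
    |((∑ j ∈ Finset.range k, padicValNat p (a + (j:ℤ) * b).natAbs : ℕ) : ℝ) - k / ((p:ℝ) - 1)|
      ≤ 2 * (Nat.log p (a.natAbs + k * b) + 1) + 1 := by
  haveI : Fact p.Prime := ⟨hp⟩
  set M := a.natAbs + k * b with hM
  set R := Nat.log p M + 1 with hR
  have hMR : M < p ^ R := Nat.lt_pow_succ_log_self hp.one_lt M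
  have hx0 : ∀ j < k, (a + (j:ℤ) * b).natAbs ≠ 0 := fun j _ => Int.natAbs_ne_zero.mpr (hnz j)
  have hxle : ∀ j < k, (a + (j:ℤ) * b).natAbs < p ^ R := by
    intro j hj
    have h1 : (a + (j:ℤ) * b).natAbs ≤ a.natAbs + ((j:ℤ) * b).natAbs := Int.natAbs_add_le _ _
    have h2 : ((j:ℤ) * (b:ℤ)).natAbs = j * b := by
      rw [Int.natAbs_mul, Int.natAbs_natCast, Int.natAbs_natCast]
    have h3 : j * b ≤ k * b := Nat.mul_le_mul_right b hj.le
    omega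
  have hswap := val_sum_eq p (fun j => (a + (j:ℤ) * b).natAbs) k R hx0 hxle
  have hfe : ∀ r, ((Finset.range k).filter (fun j : ℕ => p ^ r ∣ (a + (j:ℤ) * b).natAbs))
      = ((Finset.range k).filter (fun j : ℕ => ((p^r : ℕ):ℤ) ∣ a + (j:ℤ) * b)) := by
    intro r
    apply Finset.filter_congr
    intro j _
    rw [← Int.natCast_dvd_natCast, Int.dvd_natAbs]
  have hkpR : (k:ℝ) ≤ (p:ℝ) ^ R := by
    have : k ≤ p ^ R := by
      have : k ≤ k * b := Nat.le_mul_of_pos_right k hb1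
      omega
    exact_mod_cast this
  have hp1 : (1:ℝ) ≤ (p:ℝ) - 1 := by
    have : (2:ℕ) ≤ p := hp.two_le
    have : (2:ℝ) ≤ p := by exact_mod_cast this
    linarith
  have hppos : (0:ℝ) < p := by exact_mod_cast hp.pos
  -- rewrite the sum
  rw [hswap]
  push_cast
  have tri : |(∑ r ∈ Finset.Icc 1 R, (((Finset.range k).filter
        (fun j : ℕ => p ^ r ∣ (a + (j:ℤ) * b).natAbs)).card : ℝ))
      - ∑ r ∈ Finset.Icc 1 R, (k:ℝ) / (p:ℝ)^r| ≤ 2 * R := by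
    rw [← Finset.sum_sub_distrib]
    calc |∑ r ∈ Finset.Icc 1 R, ((((Finset.range k).filter
          (fun j : ℕ => p ^ r ∣ (a + (j:ℤ) * b).natAbs)).card : ℝ) - (k:ℝ) / (p:ℝ)^r)|
        ≤ ∑ r ∈ Finset.Icc 1 R, |(((Finset.range k).filter
          (fun j : ℕ => p ^ r ∣ (a + (j:ℤ) * b).natAbs)).card : ℝ) - (k:ℝ) / (p:ℝ)^r| :=
          Finset.abs_sum_le_sum_abs _ _
      _ ≤ ∑ _r ∈ Finset.Icc 1 R, (2:ℝ) := by
          apply Finset.sum_le_sum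
          intro r _
          rw [hfe r]
          exact count_abs p hp a b hb r k
      _ = 2 * R := by
          rw [Finset.sum_const, Nat.card_Icc]
          simp
          ring
  have geo : ∑ r ∈ Finset.Icc 1 R, (k:ℝ) / (p:ℝ)^r
      = (k:ℝ) * ((1 - ((p:ℝ)^R)⁻¹) / ((p:ℝ) - 1)) := by
    rw [← geom_inv_sum p hp.two_le R, Finset.mul_sum]
    apply Finset.sum_congr rfl
    intro r _
    rw [div_eq_mul_inv]
  have geo2 : |∑ r ∈ Finset.Icc 1 R, (k:ℝ) / (p:ℝ)^r - (k:ℝ) / ((p:ℝ) - 1)| ≤ 1 := by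
    rw [geo]
    have hpR : (0:ℝ) < (p:ℝ)^R := by positivity
    have e : (k:ℝ) * ((1 - ((p:ℝ)^R)⁻¹) / ((p:ℝ) - 1)) - (k:ℝ) / ((p:ℝ) - 1)
        = -((k:ℝ) * ((p:ℝ)^R)⁻¹ / ((p:ℝ) - 1)) := by
      field_simp
      ring
    rw [e, abs_neg, abs_of_nonneg (by positivity)]
    have h1 : (k:ℝ) * ((p:ℝ)^R)⁻¹ ≤ 1 := by
      rw [mul_inv_le_iff₀ hpR, one_mul]
      exact hkpR
    calc (k:ℝ) * ((p:ℝ)^R)⁻¹ / ((p:ℝ) - 1) ≤ 1 / ((p:ℝ) - 1) := by gcongr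
      _ ≤ 1 := by rw [div_le_one (by linarith)]; linarith
  calc |(∑ r ∈ Finset.Icc 1 R, (((Finset.range k).filter
        (fun j : ℕ => p ^ r ∣ (a + (j:ℤ) * b).natAbs)).card : ℝ)) - (k:ℝ) / ((p:ℝ) - 1)|
      ≤ |(∑ r ∈ Finset.Icc 1 R, (((Finset.range k).filter
        (fun j : ℕ => p ^ r ∣ (a + (j:ℤ) * b).natAbs)).card : ℝ))
        - ∑ r ∈ Finset.Icc 1 R, (k:ℝ) / (p:ℝ)^r|
        + |∑ r ∈ Finset.Icc 1 R, (k:ℝ) / (p:ℝ)^r - (k:ℝ) / ((p:ℝ) - 1)| := abs_sub_le _ _ _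
    _ ≤ 2 * R + 1 := by linarith [tri, geo2]
    _ = 2 * (Nat.log p M + 1) + 1 := by rw [hR]; push_cast; ring

lemma log_div_tendsto (p A B : ℕ) (hp : 2 ≤ p) :
    Tendsto (fun k : ℕ => ((Nat.log p (A + k * B) : ℝ)) / k) atTop (nhds 0) := by
  have hlog2 : (0:ℝ) < Real.log 2 := Real.log_pos (by norm_num)
  set c : ℝ := Real.log (A + B + 1) / Real.log 2 with hc
  have hc0 : 0 ≤ c := by
    apply div_nonneg _ hlog2.le
    apply Real.log_nonneg
    have : (1:ℝ) ≤ ((A + B + 1 : ℕ) : ℝ) := by exact_mod_cast Nat.one_le_iff_ne_zero.mpr (by omega)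
    push_cast at this ⊢
    linarith
  apply squeeze_zero' (g := fun k : ℕ => (c + Real.log k / Real.log 2) / k)
  · filter_upwards with k
    positivity
  · filter_upwards [eventually_ge_atTop 1] with k hk
    have hk0 : (0:ℝ) < k := by exact_mod_cast hk
    have hlogk : 0 ≤ Real.log k := Real.log_natCast_nonneg k
    gcongr
    set m := A + k * B with hm
    rcases Nat.eq_zero_or_pos m with hm0 | hm0
    · rw [hm0]
      simp only [Nat.log_zero_right, Nat.cast_zero]
      positivity
    · have s1 : Nat.log p m ≤ Nat.log 2 m := Nat.log_anti_left (by norm_num) hp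
      have hmR : (1:ℝ) ≤ (m:ℝ) := by exact_mod_cast hm0
      have s2 : (Nat.log 2 m : ℝ) ≤ Real.log m / Real.log 2 := by
        have h2 : ((2:ℝ))^(Nat.log 2 m) ≤ (m:ℝ) := by
          exact_mod_cast Nat.pow_log_le_self 2 hm0.ne'
        have h3 : Real.log ((2:ℝ)^(Nat.log 2 m)) ≤ Real.log m :=
          Real.log_le_log (by positivity) h2
        rw [Real.log_pow] at h3
        rw [le_div_iff₀ hlog2]
        linarith
      have s3 : Real.log m ≤ Real.log (A + B + 1) + Real.log k := by
        have hle : (m:ℝ) ≤ ((A + B + 1 : ℕ):ℝ) * k := by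
          have : m ≤ (A + B + 1) * k := by
            have : A + k * B ≤ A * k + B * k + k := by nlinarith [hk]
            calc m = A + k * B := hm
              _ ≤ A * k + B * k + k := this
              _ = (A + B + 1) * k := by ring
          exact_mod_cast this
        have h4 : Real.log m ≤ Real.log (((A + B + 1 : ℕ):ℝ) * k) :=
          Real.log_le_log (by linarith) hle
        have h5 : Real.log (((A + B + 1 : ℕ):ℝ) * k)
            = Real.log ((A + B + 1 : ℕ):ℝ) + Real.log k := by
          apply Real.log_mul
          · have : (1:ℝ) ≤ ((A + B + 1:ℕ):ℝ) := by exact_mod_cast Nat.one_le_iff_ne_zero.mpr (by omega)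
            linarith
          · linarith
        rw [h5] at h4
        have : Real.log ((A + B + 1 : ℕ):ℝ) = Real.log ((A:ℝ) + B + 1) := by push_cast; ring_nf
        rw [this] at h4
        exact h4
      calc (Nat.log p m : ℝ) ≤ (Nat.log 2 m : ℝ) := by exact_mod_cast s1
        _ ≤ Real.log m / Real.log 2 := s2
        _ ≤ (Real.log ((A:ℝ) + B + 1) + Real.log k) / Real.log 2 := by gcongr
        _ = c + Real.log k / Real.log 2 := by rw [hc]; push_cast; ring
  · have he : (fun k : ℕ => (c + Real.log k / Real.log 2)/k)
        = fun k : ℕ => c/k + (Real.log k / k)/Real.log 2 := by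
      funext k
      ring
    rw [he]
    have t1 : Tendsto (fun k : ℕ => c / k) atTop (nhds 0) :=
      tendsto_const_div_atTop_nhds_zero_nat c
    have t2 : Tendsto (fun k : ℕ => Real.log k / k) atTop (nhds 0) := by
      have base : Tendsto (fun x : ℝ => Real.log x / x) atTop (nhds 0) :=
        Real.isLittleO_log_id_atTop.tendsto_div_nhds_zero
      exact base.comp tendsto_natCast_atTop_atTop
    have := t1.add (t2.div_const (Real.log 2))
    simpa using this

lemma single_tendsto (p : ℕ) (hp : p.Prime) (α : ℚ) (hα : 0 ≤ padicValRat p α)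
    (hZ : ∀ l : ℕ, α ≠ -(l:ℚ)) :
    Tendsto (fun k : ℕ => (padicValRat p ((ascPochhammer ℚ k).eval α) : ℝ) / k) atTop
      (nhds (1 / ((p:ℝ) - 1))) := by
  haveI : Fact p.Prime := ⟨hp⟩
  set a := α.num with ha
  set b := α.den with hb'
  have hb : ¬ p ∣ b := den_not_dvd p α hα
  have hb1 : 1 ≤ b := α.pos
  have hadd0 : ∀ j : ℕ, α + (j:ℚ) ≠ 0 := by
    intro j H
    exact hZ j (eq_neg_of_add_eq_zero_left H)
  have hnz : ∀ j : ℕ, a + (j:ℤ) * b ≠ 0 := by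
    intro j H
    apply hadd0 j
    have hb0 : ((b : ℤ) : ℚ) ≠ 0 := by
      rw [hb']
      exact_mod_cast α.den_ne_zero
    have key : α + j = ((a + j * b : ℤ) : ℚ) / ((b : ℤ) : ℚ) := by
      rw [eq_div_iff hb0]
      push_cast
      rw [add_mul]
      congr 1
      exact_mod_cast (Rat.mul_den_eq_num α)
    rw [key, H]
    simp
  -- identify the valuation with the natural number sum
  have hval : ∀ k : ℕ, padicValRat p ((ascPochhammer ℚ k).eval α)
      = ((∑ j ∈ Finset.range k, padicValNat p (a + (j:ℤ) * b).natAbs : ℕ) : ℤ) := by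
    intro k
    rw [poch_prod]
    rw [padicValRat_prod p _ _ (fun j _ => hadd0 j), Nat.cast_sum]
    exact Finset.sum_congr rfl fun j _ => val_add_nat p α hα j (hadd0 j)
  set S : ℕ → ℕ := fun k => ∑ j ∈ Finset.range k, padicValNat p (a + (j:ℤ) * b).natAbs with hS
  have hfun : ∀ k : ℕ, (padicValRat p ((ascPochhammer ℚ k).eval α) : ℝ) / k = (S k : ℝ) / k := by
    intro k
    rw [hval k, Int.cast_natCast]
  rw [show (fun k : ℕ => (padicValRat p ((ascPochhammer ℚ k).eval α) : ℝ) / k)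
      = fun k : ℕ => (S k : ℝ) / k from funext hfun]
  rw [← tendsto_sub_nhds_zero_iff]
  apply squeeze_zero_norm' (a := fun k : ℕ => (2 * ((Nat.log p (a.natAbs + k * b) : ℝ) + 1) + 1) / k)
  · filter_upwards [eventually_ge_atTop 1] with k hk
    have hk0 : (0:ℝ) < k := by exact_mod_cast hk
    have hest := S_est p hp a b hb hb1 hnz k
    have e : (S k : ℝ) / k - 1 / ((p:ℝ) - 1) = ((S k : ℝ) - k / ((p:ℝ) - 1)) / k := by
      field_simp
    rw [Real.norm_eq_abs, e, abs_div, abs_of_pos hk0]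
    gcongr
  · have t1 := log_div_tendsto p a.natAbs b hp.two_le
    have t2 := tendsto_const_div_atTop_nhds_zero_nat (3:ℝ)
    have he : (fun k : ℕ => (2 * ((Nat.log p (a.natAbs + k * b) : ℝ) + 1) + 1) / k)
        = fun k : ℕ => 2 * ((Nat.log p (a.natAbs + k * b) : ℝ) / k) + 3 / k := by
      funext k
      ring
    rw [he]
    have := (t1.const_mul (2:ℝ)).add t2
    simpa using this

theorem hypergeometric_valuation_limit
    (p : ℕ) (hp : p.Prime) (n m : ℕ) (α : Fin n → ℚ) (β : Fin m → ℚ)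
    (hα : ∀ i, 0 ≤ padicValRat p (α i)) (hβ : ∀ j, 0 ≤ padicValRat p (β j))
    (hαZ : ∀ i (l : ℕ), α i ≠ -(l : ℚ)) (hβZ : ∀ j (l : ℕ), β j ≠ -(l : ℚ))
    (h : ℕ → ℚ)
    (hh : ∀ k, h k = (∏ i, (ascPochhammer ℚ k).eval (α i)) /
      (∏ j, (ascPochhammer ℚ k).eval (β j))) :
    Filter.Tendsto (fun k : ℕ => (padicValRat p (h k) : ℝ) / k) Filter.atTop
      (nhds (((n : ℝ) - m) / ((p : ℝ) - 1))) := by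
  haveI : Fact p.Prime := ⟨hp⟩
  have hPα : ∀ (i : Fin n) (k : ℕ), (ascPochhammer ℚ k).eval (α i) ≠ 0 := by
    intro i k H
    rw [ascPochhammer_eval_eq_zero_iff] at H
    obtain ⟨l, _, hl2⟩ := H
    exact hαZ i l (by linarith [hl2])
  have hPβ : ∀ (j : Fin m) (k : ℕ), (ascPochhammer ℚ k).eval (β j) ≠ 0 := by
    intro j k H
    rw [ascPochhammer_eval_eq_zero_iff] at H
    obtain ⟨l, _, hl2⟩ := H
    exact hβZ j l (by linarith [hl2])
  have hprodα : ∀ k, (∏ i, (ascPochhammer ℚ k).eval (α i)) ≠ 0 :=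
    fun k => Finset.prod_ne_zero_iff.mpr fun i _ => hPα i k
  have hprodβ : ∀ k, (∏ j, (ascPochhammer ℚ k).eval (β j)) ≠ 0 :=
    fun k => Finset.prod_ne_zero_iff.mpr fun j _ => hPβ j k
  have hvk : ∀ k, padicValRat p (h k)
      = (∑ i, padicValRat p ((ascPochhammer ℚ k).eval (α i)))
        - ∑ j, padicValRat p ((ascPochhammer ℚ k).eval (β j)) := by
    intro k
    rw [hh k, padicValRat.div (hprodα k) (hprodβ k),
      padicValRat_prod p _ _ (fun i _ => hPα i k),
      padicValRat_prod p _ _ (fun j _ => hPβ j k)]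
  have hfun : (fun k : ℕ => (padicValRat p (h k) : ℝ) / k)
      = fun k : ℕ => (∑ i, (padicValRat p ((ascPochhammer ℚ k).eval (α i)) : ℝ) / k)
        - ∑ j, (padicValRat p ((ascPochhammer ℚ k).eval (β j)) : ℝ) / k := by
    funext k
    rw [hvk k]
    push_cast
    rw [sub_div, Finset.sum_div, Finset.sum_div]
  rw [hfun]
  have tα : Tendsto (fun k : ℕ =>
      ∑ i, (padicValRat p ((ascPochhammer ℚ k).eval (α i)) : ℝ) / k) atTop
      (nhds (∑ _i : Fin n, 1 / ((p:ℝ) - 1))) :=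
    tendsto_finset_sum _ fun i _ => single_tendsto p hp (α i) (hα i) (hαZ i)
  have tβ : Tendsto (fun k : ℕ =>
      ∑ j, (padicValRat p ((ascPochhammer ℚ k).eval (β j)) : ℝ) / k) atTop
      (nhds (∑ _j : Fin m, 1 / ((p:ℝ) - 1))) :=
    tendsto_finset_sum _ fun j _ => single_tendsto p hp (β j) (hβ j) (hβZ j)
  have hval : (∑ _i : Fin n, 1 / ((p:ℝ) - 1)) - (∑ _j : Fin m, 1 / ((p:ℝ) - 1))
      = ((n : ℝ) - m) / ((p : ℝ) - 1) := by
    rw [Finset.sum_const, Finset.sum_const, Finset.card_univ, Finset.card_univ,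
      Fintype.card_fin, Fintype.card_fin]
    push_cast
    ring
  rw [← hval]
  exact tα.sub tβ
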